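/- arXiv:1303.4818 — 5 statements merged into one kernel-verified Lean document; each statement's English description precedes it below -/
import Mathlib

section
/- For any field K of characteristic 0 and any positive integer k, the set of elements of K expressible as a sum of k-th powers of totally positive elements of K equals the set of elements expressible as a sum of 2k-th powers of elements of K. -/
/-!
Sums of `2k`-th powers are sums of `k`-th powers of squares, so the content is that `c ^ k` is a
sum of `2k`-th powers whenever `c` is a sum of squares: a rational form of Hilbert's identity.

Let `ξ` be a finitely supported symmetric random variable with nonnegative rational weights and
rational values whose moments up to order `2k` are those of a centred Gaussian. For
`c = ∑ xᵢ ^ 2` and independent copies `ξᵢ`, the moments of `∑ ξᵢ xᵢ` follow from the binomial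
rule, under which Gaussian moments are stable, so `E[(∑ ξᵢ xᵢ) ^ 2k]` is a positive rational
multiple of `c ^ k`; by construction it is a nonnegative rational combination of `2k`-th powers.

Such a quadrature `ξ` exists because the Gaussian moment vector is an interior point of the cone
spanned by the moment vectors `(σ ^ 2m)_{m ≤ k}`, `σ ∈ ℚ`: a supporting functional would be a
nonzero polynomial that is nonnegative on `[0, ∞)` but has nonpositive Gaussian integral. A
rational interior point of a cone spanned by rational vectors is a nonnegative rational
combination of them.
-/

open Finset Polynomial MeasureTheory Real Matrix Topology

namespace HilbertIdentity

/-- `Γ(m + 1/2) / √π`, the `2m`-th moment of a centred Gaussian of variance `1/2`. -/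
def gaussMoment (m : ℕ) : ℚ := (2 * m).factorial / (4 ^ m * m.factorial)

lemma gaussMoment_pos (m : ℕ) : 0 < gaussMoment m := by
  unfold gaussMoment; positivity

lemma gaussMoment_succ (m : ℕ) : gaussMoment (m + 1) = (m + 1 / 2) * gaussMoment m := by
  simp only [gaussMoment, show 2 * (m + 1) = 2 * m + 1 + 1 by ring, Nat.factorial_succ]
  push_cast
  field_simp
  ring

lemma choose_mul_gaussMoment_mul_gaussMoment {i m : ℕ} (h : i ≤ m) :
    ((2 * m).choose (2 * i) : ℚ) * (gaussMoment i * gaussMoment (m - i)) =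
      m.choose i * gaussMoment m := by
  rw [Nat.cast_choose ℚ h, Nat.cast_choose ℚ (by omega : 2 * i ≤ 2 * m),
    show 2 * m - 2 * i = 2 * (m - i) by omega]
  have h4 : (4 : ℚ) ^ m = 4 ^ i * 4 ^ (m - i) := by rw [← pow_add, Nat.add_sub_cancel' h]
  simp only [gaussMoment, h4]
  field_simp

lemma _root_.Real.Gamma_nat_add_half_eq_gaussMoment (m : ℕ) :
    Real.Gamma (m + 1 / 2) = gaussMoment m * √π := by
  induction m with
  | zero => simpa [gaussMoment] using Real.Gamma_one_half_eq
  | succ m ih =>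
    rw [Nat.cast_succ, add_right_comm, Real.Gamma_add_one (by positivity), ih, gaussMoment_succ]
    push_cast
    ring

private lemma pow_mul_gammaDensity {t : ℝ} (ht : 0 < t) (m : ℕ) :
    t ^ m * (Real.exp (-t) * t ^ (-(1 / 2) : ℝ)) = Real.exp (-t) * t ^ ((m + 1 / 2 : ℝ) - 1) := by
  rw [show (m : ℝ) + 1 / 2 - 1 = m + (-(1 / 2)) by ring, Real.rpow_add ht, Real.rpow_natCast]
  ring

lemma integrableOn_pow_mul_gammaDensity (m : ℕ) :
    IntegrableOn (fun t : ℝ => t ^ m * (Real.exp (-t) * t ^ (-(1 / 2) : ℝ))) (Set.Ioi 0) :=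
  (Real.GammaIntegral_convergent (by positivity : (0 : ℝ) < m + 1 / 2)).congr_fun
    (fun _ ht => (pow_mul_gammaDensity ht m).symm) measurableSet_Ioi

lemma integral_pow_mul_gammaDensity (m : ℕ) :
    ∫ t in Set.Ioi (0 : ℝ), t ^ m * (Real.exp (-t) * t ^ (-(1 / 2) : ℝ)) = gaussMoment m * √π := by
  rw [← Real.Gamma_nat_add_half_eq_gaussMoment, Real.Gamma_eq_integral (by positivity)]
  exact setIntegral_congr_fun measurableSet_Ioi fun t ht => pow_mul_gammaDensity ht m

lemma finite_setOf_sum_mul_pow_eq_zero {n : ℕ} {c : Fin n → ℝ} (hc : c ≠ 0) :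
    {t : ℝ | ∑ m, c m * t ^ (m : ℕ) = 0}.Finite := by
  set P := (degreeLTEquiv ℝ n).symm c
  have hP : ∀ t : ℝ, (P : ℝ[X]).eval t = ∑ m, c m * t ^ (m : ℕ) := fun t => by
    rw [eval_eq_sum_degreeLTEquiv P.2]; simp [P]
  have hP0 : (P : ℝ[X]) ≠ 0 := by
    intro h
    exact hc (by simpa [P] using congrArg (degreeLTEquiv ℝ n) (Subtype.ext h : P = 0))
  simpa [hP] using (P : ℝ[X]).finite_setOfPred_isRoot hP0

lemma sum_mul_gaussMoment_pos {n : ℕ} {c : Fin n → ℝ} (hc : c ≠ 0)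
    (hnn : ∀ t, 0 ≤ t → 0 ≤ ∑ m, c m * t ^ (m : ℕ)) : 0 < ∑ m, c m * (gaussMoment m : ℝ) := by
  set w : ℝ → ℝ := fun t => Real.exp (-t) * t ^ (-(1 / 2) : ℝ)
  have hint : ∀ m : Fin n, IntegrableOn (fun t => c m * (t ^ (m : ℕ) * w t)) (Set.Ioi 0) :=
    fun m => (integrableOn_pow_mul_gammaDensity m).const_mul (c m)
  have hval : ∫ t in Set.Ioi (0 : ℝ), (∑ m, c m * t ^ (m : ℕ)) * w t =
      (∑ m, c m * (gaussMoment m : ℝ)) * √π := by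
    simp_rw [Finset.sum_mul, mul_assoc]
    rw [integral_finsetSum _ fun m _ => hint m]
    simp_rw [integral_const_mul, w, integral_pow_mul_gammaDensity]
  have hpos : 0 < ∫ t in Set.Ioi (0 : ℝ), (∑ m, c m * t ^ (m : ℕ)) * w t := by
    have hZ := finite_setOf_sum_mul_pow_eq_zero hc
    rw [setIntegral_pos_iff_support_of_nonneg_ae]
    · calc (0 : ENNReal) < ⊤ := ENNReal.zero_lt_top
        _ = volume (Set.Ioi (0 : ℝ) \ {t | ∑ m, c m * t ^ (m : ℕ) = 0}) := by
          rw [measure_sdiff_null (hZ.measure_zero _), Real.volume_Ioi]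
        _ ≤ _ := by
          refine measure_mono fun t ⟨ht, hz⟩ => ⟨mul_ne_zero hz ?_, ht⟩
          have : 0 < t := ht
          positivity
    · exact ae_restrict_of_forall_mem measurableSet_Ioi fun t (ht : 0 < t) =>
        mul_nonneg (hnn t ht.le) (by positivity)
    · simp only [Finset.sum_mul, mul_assoc]
      exact integrable_finsetSum _ fun m _ => hint m
  rw [hval] at hpos
  exact pos_of_mul_pos_left hpos (Real.sqrt_nonneg _)

section RationalCone

lemma exists_rat_pos_sub_smul_mem {E : Type*} [SeminormedAddCommGroup E] [NormedSpace ℝ E]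
    {s : Set E} {y : E} (hy : y ∈ interior s) (v : E) :
    ∃ δ : ℚ, 0 < δ ∧ y - (δ : ℝ) • v ∈ s := by
  obtain ⟨ε, hε, hball⟩ := Metric.isOpen_iff.mp isOpen_interior y hy
  obtain ⟨δ, hδ, hδε⟩ := exists_rat_btwn (div_pos hε (by positivity : 0 < ‖v‖ + 1))
  refine ⟨δ, by exact_mod_cast hδ, interior_subset (hball ?_)⟩
  rw [lt_div_iff₀ (by positivity)] at hδε
  rw [Metric.mem_ball, dist_eq_norm, sub_sub_cancel_left, norm_neg, norm_smul,
    Real.norm_of_nonneg hδ.le]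
  nlinarith [norm_nonneg v]

lemma exists_rat_nonneg_mem_nhds {κ : Type*} [Fintype κ] {c : κ → ℝ} (hc : ∀ l, 0 ≤ c l)
    {U : Set (κ → ℝ)} (hU : U ∈ 𝓝 c) : ∃ q : κ → ℚ, (∀ l, 0 ≤ q l) ∧ (fun l => (q l : ℝ)) ∈ U := by
  obtain ⟨η, hη, hball⟩ := Metric.mem_nhds_iff.mp hU
  choose q hq using fun l => exists_rat_btwn (lt_add_of_pos_right (c l) hη)
  refine ⟨q, fun l => by exact_mod_cast (hc l).trans (hq l).1.le,
    hball ((dist_pi_lt_iff hη).2 fun l => ?_)⟩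
  rw [Real.dist_eq, abs_sub_lt_iff]
  constructor <;> linarith [hq l]

variable {ι : Type*} {N : ℕ}

def realHull (g : ι → Fin N → ℚ) : PointedCone ℝ (Fin N → ℝ) :=
  PointedCone.hull ℝ (Set.range fun i m => (g i m : ℝ))

private lemma of_mulVec_eq_sum {R : Type*} [CommSemiring R] (v : Fin N → Fin N → R)
    (a : Fin N → R) : (Matrix.of fun m i => v i m) *ᵥ a = ∑ i, a i • v i := by
  funext m; simp [Matrix.mulVec, dotProduct, mul_comm]

lemma interior_realHull_nonempty_of_isUnit_det (g : ι → Fin N → ℚ) (b : Fin N → ι)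
    (hb : IsUnit (Matrix.of fun m i => g (b i) m).det) :
    (interior (realHull g : Set (Fin N → ℝ))).Nonempty := by
  set A : Matrix (Fin N) (Fin N) ℝ := Matrix.of fun m i => (g (b i) m : ℝ)
  have hA : IsUnit A := by
    rw [Matrix.isUnit_iff_isUnit_det,
      show A.det = Rat.castHom ℝ (Matrix.of fun m i => g (b i) m).det by rw [RingHom.map_det]; rfl]
    exact hb.map _
  have hopen : IsOpen (A.mulVecLin '' Set.pi Set.univ fun _ => Set.Ioi 0) :=
    LinearMap.isOpenMap_of_finiteDimensional _ (Matrix.mulVec_surjective_iff_isUnit.2 hA) _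
      (isOpen_set_pi Set.finite_univ fun _ _ => isOpen_Ioi)
  refine ⟨A *ᵥ 1, interior_maximal ?_ hopen ⟨1, fun _ _ => Set.mem_Ioi.2 one_pos, rfl⟩⟩
  rintro _ ⟨a, ha, rfl⟩
  rw [Matrix.mulVecLin_apply, of_mulVec_eq_sum (fun i m => (g (b i) m : ℝ))]
  exact sum_mem fun i _ => PointedCone.smul_mem _ (ha i trivial).le
    (PointedCone.subset_hull ⟨b i, rfl⟩)

lemma mem_hull_of_cast_mem_interior_realHull (g : ι → Fin N → ℚ) (b : Fin N → ι)
    (hb : IsUnit (Matrix.of fun m i => g (b i) m).det) {x : Fin N → ℚ}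
    (hx : (fun m => (x m : ℝ)) ∈ interior (realHull g : Set (Fin N → ℝ))) :
    x ∈ PointedCone.hull ℚ (Set.range g) := by
  set gR : ι → Fin N → ℝ := fun i m => (g i m : ℝ)
  set A := Matrix.of fun m i => g (b i) m
  set W := A⁻¹.map (Rat.castHom ℝ)
  have hW : ∀ v : Fin N → ℚ, W *ᵥ (fun m => (v m : ℝ)) = fun m => ((A⁻¹ *ᵥ v) m : ℝ) :=
    fun v => funext fun i => (RingHom.map_mulVec (Rat.castHom ℝ) A⁻¹ v i).symm
  obtain ⟨δ, hδ, hy⟩ := exists_rat_pos_sub_smul_mem hx fun m => ((A *ᵥ 1) m : ℝ)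
  obtain ⟨M, c, h, hsum⟩ := Submodule.mem_span_set'.mp hy
  choose j hj using fun l => (h l).2
  -- Rounding the real weights `c` to rationals leaves a small error, absorbed by the basis.
  set Φ : (Fin M → ℝ) → (Fin N → ℝ) := fun q => W *ᵥ ((fun m => (x m : ℝ)) - ∑ l, q l • gR (j l))
  have hΦc : Φ (fun l => c l) = fun _ => (δ : ℝ) := by
    have : ∑ l, (c l : ℝ) • gR (j l) = ∑ l, c l • (h l : Fin N → ℝ) :=
      sum_congr rfl fun l _ => by rw [← hj l]; rfl
    simp only [Φ, this, hsum, sub_sub_cancel, mulVec_smul, hW, mulVec_mulVec, nonsing_inv_mul _ hb,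
      one_mulVec]
    funext; simp
  have hU : Φ ⁻¹' Set.pi Set.univ (fun _ => Set.Ioi 0) ∈ 𝓝 (fun l => (c l : ℝ)) :=
    (by fun_prop : Continuous Φ).continuousAt.preimage_mem_nhds <|
      (isOpen_set_pi Set.finite_univ fun _ _ => isOpen_Ioi).mem_nhds
        (by rw [hΦc]; exact fun _ _ => Set.mem_Ioi.2 (Rat.cast_pos.2 hδ))
  obtain ⟨q, hq0, hq⟩ := exists_rat_nonneg_mem_nhds (fun l => (c l).2) hU
  set a := A⁻¹ *ᵥ (x - ∑ l, q l • g (j l))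
  have hΦq : Φ (fun l => q l) = fun m => (a m : ℝ) := by
    rw [← hW]
    simp only [Φ]
    congr 1
    funext m
    simp [gR, Finset.sum_apply]
  have ha : ∀ i, 0 < a i := fun i => by
    have := hq i trivial
    rw [hΦq] at this
    exact Rat.cast_pos.1 (Set.mem_Ioi.1 this)
  rw [show x = ∑ l, q l • g (j l) + A *ᵥ a by
    rw [mulVec_mulVec, mul_nonsing_inv _ hb, one_mulVec]; abel]
  refine add_mem (sum_mem fun l _ =>
    PointedCone.smul_mem _ (hq0 l) (PointedCone.subset_hull ⟨j l, rfl⟩)) ?_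
  rw [of_mulVec_eq_sum (fun i => g (b i))]
  exact sum_mem fun i _ => PointedCone.smul_mem _ (ha i).le (PointedCone.subset_hull ⟨b i, rfl⟩)

end RationalCone

section Quadrature

variable (n : ℕ)

def evenPowVec (σ : ℚ) : Fin (n + 1) → ℚ := fun m => σ ^ (2 * (m : ℕ))

lemma isUnit_det_evenPowVec_succ :
    IsUnit (Matrix.of fun m (i : Fin (n + 1)) => evenPowVec n ((i : ℚ) + 1) m).det := by
  have hinj : Function.Injective fun i : Fin (n + 1) => ((i : ℚ) + 1) ^ 2 := fun i i' h => by
    have := (pow_left_inj₀ (by positivity) (by positivity) two_ne_zero).mp h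
    exact Fin.ext (by exact_mod_cast add_right_cancel this)
  rw [isUnit_iff_ne_zero, ← det_transpose]
  convert det_vandermonde_ne_zero_iff.mpr hinj using 3
  ext m i
  simp [evenPowVec, vandermonde, pow_mul]

lemma gaussMoment_mem_interior_realHull :
    (fun m : Fin (n + 1) => (gaussMoment m : ℝ)) ∈ interior (realHull (evenPowVec n) : Set _) := by
  set C := realHull (evenPowVec n)
  set τ : Fin (n + 1) → ℝ := fun m => (gaussMoment m : ℝ)
  by_contra hτ
  obtain ⟨f, hf0, hf⟩ := geometric_hahn_banach_of_nonempty_interior_point C.convex hτ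
    (interior_realHull_nonempty_of_isUnit_det _ _ (isUnit_det_evenPowVec_succ n))
  have hfτ : 0 ≤ f τ := by simpa using hf 0 C.zero_mem
  have hC : ∀ y ∈ C, f y ≤ 0 := by
    intro y hy
    by_contra! hpos
    have := hf _ (C.smul_mem (by positivity : 0 ≤ (f τ + 1) / f y) hy)
    rw [map_smul, smul_eq_mul, div_mul_cancel₀ _ hpos.ne'] at this
    linarith
  set c : Fin (n + 1) → ℝ := fun m => -f fun j => if m = j then 1 else 0
  have hfc : ∀ y, f y = -∑ m, c m * y m := fun y => by
    have := LinearMap.pi_apply_eq_sum_univ (f : (Fin (n + 1) → ℝ) →ₗ[ℝ] ℝ) y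
    simp only [ContinuousLinearMap.coe_coe, smul_eq_mul] at this
    simp [this, c, mul_comm]
  have hc : c ≠ 0 := fun h => hf0 (ContinuousLinearMap.ext fun y => by simp [hfc, h])
  have hsq : ∀ s : ℝ, 0 ≤ ∑ m, c m * (s ^ 2) ^ (m : ℕ) := fun s =>
    Rat.denseRange_cast.induction_on s (isClosed_le continuous_const (by fun_prop)) fun σ => by
      have := hC _ (PointedCone.subset_hull ⟨σ, rfl⟩)
      rw [hfc] at this
      push_cast [evenPowVec, ← pow_mul] at this ⊢
      linarith
  have := sum_mul_gaussMoment_pos hc fun t ht => by simpa [Real.sq_sqrt ht] using hsq √t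
  rw [hfc] at hfτ
  linarith

theorem exists_rat_quadrature : ∃ (M : ℕ) (w σ : Fin M → ℚ), (∀ l, 0 ≤ w l) ∧
    ∀ m ≤ n, ∑ l, w l * σ l ^ (2 * m) = gaussMoment m := by
  obtain ⟨M, w, h, hsum⟩ := Submodule.mem_span_set'.mp <| mem_hull_of_cast_mem_interior_realHull _ _
    (isUnit_det_evenPowVec_succ n) (gaussMoment_mem_interior_realHull n)
  choose σ hσ using fun l => (h l).2
  refine ⟨M, fun l => w l, σ, fun l => (w l).2, fun m hm => ?_⟩
  have := congrFun hsum ⟨m, Nat.lt_succ_of_le hm⟩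
  simp only [Finset.sum_apply, ← hσ, ← Nonneg.coe_smul] at this
  simpa [evenPowVec] using this

end Quadrature

lemma sum_range_two_mul_add_one_of_odd_eq_zero {M : Type*} [AddCommMonoid M] (f : ℕ → M)
    (m : ℕ) (h : ∀ j < m, f (2 * j + 1) = 0) :
    ∑ i ∈ range (2 * m + 1), f i = ∑ j ∈ range (m + 1), f (2 * j) := by
  induction m with
  | zero => simp
  | succ m ih =>
    rw [show 2 * (m + 1) + 1 = 2 * m + 1 + 1 + 1 by ring, sum_range_succ, sum_range_succ,
      ih fun j hj => h j (by omega), h m (by omega), add_zero, sum_range_succ (n := m + 1)]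
    rfl

lemma sum_prod_mul_add_pow {R ι κ : Type*} [CommSemiring R] [Fintype ι] [Fintype κ]
    (β L : ι → R) (γ M : κ → R) (e : ℕ) :
    ∑ p : ι × κ, β p.1 * γ p.2 * (L p.1 + M p.2) ^ e =
      ∑ i ∈ range (e + 1), (∑ s, β s * L s ^ i) * (∑ t, γ t * M t ^ (e - i)) * e.choose i := by
  simp_rw [Fintype.sum_prod_type, add_pow, mul_sum, sum_mul]
  rw [sum_comm, ← sum_congr rfl fun _ _ => sum_comm, sum_comm]
  exact sum_congr rfl fun _ _ => sum_congr rfl fun _ _ => sum_congr rfl fun _ _ => by ring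

section GaussianFamily

variable {K : Type*} [Field K] [CharZero K]

/-- The weighted points `(β i, L i)` form a discrete distribution on `K` whose moments of order
at most `2k` are those of a centred Gaussian of variance `c / 2`. -/
def HasGaussianMoments (k : ℕ) (c : K) : Prop :=
  ∃ (ι : Type) (_ : Fintype ι) (β : ι → ℚ) (L : ι → K), (∀ i, 0 ≤ β i) ∧
    (∀ j ≤ k, ∑ i, (β i : K) * L i ^ (2 * j) = gaussMoment j * c ^ j) ∧
    ∀ j < k, ∑ i, (β i : K) * L i ^ (2 * j + 1) = 0

lemma hasGaussianMoments_sq (k : ℕ) (a : K) : HasGaussianMoments k (a ^ 2) := by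
  obtain ⟨M, w, σ, hw, hmom⟩ := exists_rat_quadrature k
  -- symmetrising the quadrature `± a σ l` kills the odd moments
  refine ⟨Bool × Fin M, inferInstance, fun p => w p.2 / 2,
    fun p => (bif p.1 then a else -a) * σ p.2, fun p => div_nonneg (hw p.2) zero_le_two,
    fun j hj => ?_, fun j _ => ?_⟩
  · have := congrArg (Rat.cast : ℚ → K) (hmom j hj)
    push_cast at this
    simp only [Fintype.sum_prod_type, Fintype.sum_bool, cond_true, cond_false, mul_pow,
      (even_two_mul j).neg_pow]
    rw [← pow_mul, ← this, sum_mul, ← sum_add_distrib]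
    push_cast
    refine sum_congr rfl fun l _ => by ring
  · simp [Fintype.sum_prod_type, mul_pow, (odd_two_mul_add_one j).neg_pow]

lemma HasGaussianMoments.add {k : ℕ} {c d : K} (hc : HasGaussianMoments k c)
    (hd : HasGaussianMoments k d) : HasGaussianMoments k (c + d) := by
  obtain ⟨ι, _, β, L, hβ, hev, hodd⟩ := hc
  obtain ⟨κ, _, γ, M, hγ, hev', hodd'⟩ := hd
  refine ⟨ι × κ, inferInstance, fun p => β p.1 * γ p.2, fun p => L p.1 + M p.2,
    fun p => mul_nonneg (hβ p.1) (hγ p.2), fun m hm => ?_, fun m hm => ?_⟩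
  · push_cast
    rw [sum_prod_mul_add_pow (fun s => (β s : K)) L (fun t => (γ t : K)) M,
      sum_range_two_mul_add_one_of_odd_eq_zero _ m
        fun j hj => by rw [hodd j (by omega), zero_mul, zero_mul], add_pow, mul_sum]
    refine sum_congr rfl fun j hj => ?_
    have hjm : j ≤ m := Nat.lt_succ_iff.mp (mem_range.mp hj)
    rw [show 2 * m - 2 * j = 2 * (m - j) by omega, hev j (by omega), hev' (m - j) (by omega)]
    have := congrArg (Rat.cast : ℚ → K) (choose_mul_gaussMoment_mul_gaussMoment hjm)
    push_cast at this
    linear_combination (c ^ j * d ^ (m - j)) * this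
  · push_cast
    rw [sum_prod_mul_add_pow (fun s => (β s : K)) L (fun t => (γ t : K)) M]
    refine sum_eq_zero fun i hi => ?_
    have hi : i ≤ 2 * m + 1 := Nat.lt_succ_iff.mp (mem_range.mp hi)
    obtain ⟨j, rfl | rfl⟩ := Nat.even_or_odd' i
    · rw [show 2 * m + 1 - 2 * j = 2 * (m - j) + 1 by omega, hodd' (m - j) (by omega)]
      simp
    · rw [hodd j (by omega)]
      simp

lemma _root_.IsSumSq.hasGaussianMoments (k : ℕ) {c : K} (hc : IsSumSq c) :
    HasGaussianMoments k c := by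
  induction hc with
  | zero => simpa using hasGaussianMoments_sq k (0 : K)
  | sq_add a _ ih => simpa [sq] using (hasGaussianMoments_sq k a).add ih

end GaussianFamily

section PowerSums

/-- The paper's `P(K, 2k)` is `powSums K (2 * k)`. -/
def powSums (R : Type*) [Semiring R] (n : ℕ) : AddSubmonoid R :=
  AddSubmonoid.closure (Set.range fun x : R => x ^ n)

variable {R : Type*} [Semiring R] {n : ℕ}

lemma pow_mem_powSums (x : R) : x ^ n ∈ powSums R n :=
  AddSubmonoid.subset_closure ⟨x, rfl⟩

lemma mem_powSums_iff {a : R} : a ∈ powSums R n ↔ ∃ (N : ℕ) (c : Fin N → R), a = ∑ i, c i ^ n := by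
  refine ⟨fun ha => ?_, fun ⟨N, c, ha⟩ => ha ▸ sum_mem fun i _ => pow_mem_powSums (c i)⟩
  induction ha using AddSubmonoid.closure_induction with
  | mem _ hx =>
    obtain ⟨x, rfl⟩ := hx
    exact ⟨1, fun _ => x, by simp⟩
  | zero => exact ⟨0, Fin.elim0, by simp⟩
  | add _ _ _ _ ha hb =>
    obtain ⟨N, c, rfl⟩ := ha
    obtain ⟨N', c', rfl⟩ := hb
    exact ⟨N + N', Fin.append c c', by simp [Fin.sum_univ_add]⟩

variable {K : Type*} [Field K] [CharZero K]

lemma ratCast_mul_pow_mem_powSums (hn : n ≠ 0) {q : ℚ} (hq : 0 ≤ q) (y : K) :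
    (q : K) * y ^ n ∈ powSums K n := by
  obtain ⟨n, rfl⟩ := Nat.exists_eq_add_one.mpr (Nat.pos_of_ne_zero hn)
  have hden : (q.den : K) ≠ 0 := Nat.cast_ne_zero.mpr q.den_nz
  have hnum : ((q.num.toNat : ℕ) : K) = q.num := by
    exact_mod_cast Int.toNat_of_nonneg (Rat.num_nonneg.mpr hq)
  have key : (q : K) * y ^ (n + 1) = (q.num.toNat * q.den ^ n) • (y / q.den) ^ (n + 1) := by
    rw [nsmul_eq_mul, div_pow, Rat.cast_def]
    push_cast
    rw [hnum]
    field_simp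
    ring
  rw [key]
  exact AddSubmonoid.nsmul_mem _ (pow_mem_powSums _) _

lemma _root_.IsSumSq.pow_mem_powSums {k : ℕ} (hk : 0 < k) {c : K} (hc : IsSumSq c) :
    c ^ k ∈ powSums K (2 * k) := by
  obtain ⟨ι, _, β, L, hβ, hev, -⟩ := hc.hasGaussianMoments k
  have hc : c ^ k = ∑ i, ((β i / gaussMoment k : ℚ) : K) * L i ^ (2 * k) := by
    have hg : (gaussMoment k : K) ≠ 0 := by exact_mod_cast (gaussMoment_pos k).ne'
    push_cast
    simp_rw [div_mul_eq_mul_div, ← sum_div, hev k le_rfl]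
    field_simp
  rw [hc]
  exact sum_mem fun i _ =>
    ratCast_mul_pow_mem_powSums (by omega) (div_nonneg (hβ i) (gaussMoment_pos k).le) _

end PowerSums

end HilbertIdentity

theorem totally_positive_kth_powers_eq_2kth_powers (K : Type*) [Field K] [CharZero K]
    (k : ℕ) (hk : 0 < k) (a : K) :
    (∃ (n : ℕ) (c : Fin n → K), (∀ i, IsSumSq (c i)) ∧ a = ∑ i, c i ^ k) ↔
    (∃ (n : ℕ) (c : Fin n → K), a = ∑ i, c i ^ (2 * k)) := by
  constructor
  · rintro ⟨n, c, hc, rfl⟩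
    exact HilbertIdentity.mem_powSums_iff.mp (sum_mem fun i _ => (hc i).pow_mem_powSums hk)
  · rintro ⟨n, c, rfl⟩
    exact ⟨n, fun i => c i ^ 2, fun i => (IsSquare.sq (c i)).isSumSq, by simp [pow_mul]⟩
end

section
/- Every element of a field F of characteristic 0 is a sum of at most 3 cubes of elements of F, provided F is infinite enough to choose s with the required nonvanishing; precisely, for r, s ∈ F with s ≠ 0 and t = 3r/s^3 satisfying 1 - t + t^2 ≠ 0, one has r = (s(1+t^3)/(3(1-t+t^2)))^3 + (s(3t-1-t^3)/(3(1-t+t^2)))^3 + ((s(3t-3t^2))/(3(1-t+t^2)))^3. -/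
/-! Richmond's identity `(1 + t³)³ + (3t - 1 - t³)³ + (3t - 3t²)³ = 9t(1 - t + t²)³` holds over any
commutative ring. Dividing by `(3(1 - t + t²))³` and scaling by `s³` turns its right-hand side into
`s³t/3`, which is `r` for `t = 3r/s³`. -/

theorem richmond_identity {R : Type*} [CommRing R] (t : R) :
    (1 + t ^ 3) ^ 3 + (3 * t - 1 - t ^ 3) ^ 3 + (3 * t - 3 * t ^ 2) ^ 3 =
      9 * t * (1 - t + t ^ 2) ^ 3 := by
  ring

theorem richmond_three_cubes (F : Type*) [Field F] (h3 : (3 : F) ≠ 0)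
    (r s : F) (hs : s ≠ 0) (ht : 1 - 3 * r / s ^ 3 + (3 * r / s ^ 3) ^ 2 ≠ 0) :
    letI t := 3 * r / s ^ 3
    r = (s * (1 + t ^ 3) / (3 * (1 - t + t ^ 2))) ^ 3 +
        (s * (3 * t - 1 - t ^ 3) / (3 * (1 - t + t ^ 2))) ^ 3 +
        (s * (3 * t - 3 * t ^ 2) / (3 * (1 - t + t ^ 2))) ^ 3 := by
  set t := 3 * r / s ^ 3 with ht_def
  have hr : r = s ^ 3 * t / 3 := by rw [ht_def]; field_simp
  simp only [div_pow, mul_pow, ← add_div, ← mul_add, richmond_identity]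
  rw [hr]
  field_simp
  ring
end

section
/- Let K = Q(θ) be an algebraic number field with real embeddings σ_1, ..., σ_r. For any real numbers η_1, ..., η_r and any ε > 0, there exists β ∈ K such that |σ_i(β) - η_i| < ε for all 1 ≤ i ≤ r. -/
/-!
Each target `η i` is approximated by a rational number, which every embedding fixes, so it
suffices to approximate rational targets in `K` at the distinct infinite places `|σ i ·|`. That
is weak approximation for the infinite places of `K` (`InfinitePlace.denseRange_algebraMap_pi`).
-/

namespace NumberField.InfinitePlace

variable {K : Type*} [Field K]

theorem mk_ofRealHom_comp_apply (σ : K →+* ℝ) (x : K) :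
    mk (Complex.ofRealHom.comp σ) x = |σ x| := by
  simp [apply]

theorem mk_ofRealHom_comp_injective :
    Function.Injective fun σ : K →+* ℝ ↦ mk (Complex.ofRealHom.comp σ) := by
  intro σ τ h
  have hreal :
      ComplexEmbedding.conjugate (Complex.ofRealHom.comp σ) = Complex.ofRealHom.comp σ :=
    RingHom.ext fun x ↦ Complex.conj_ofReal (σ x)
  have hcomp : Complex.ofRealHom.comp σ = Complex.ofRealHom.comp τ := by
    rcases mk_eq_iff.mp h with h | h
    · exact h
    · rwa [hreal] at h
  exact RingHom.ext fun x ↦ Complex.ofReal_injective (RingHom.congr_fun hcomp x)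

theorem exists_forall_apply_sub_lt [NumberField K] {ι : Type*} {w : ι → InfinitePlace K}
    (hw : Function.Injective w) (x : ι → K) {ε : ℝ} (hε : 0 < ε) :
    ∃ β : K, ∀ i, w i (β - x i) < ε := by
  classical
  let y : (v : InfinitePlace K) → WithAbs v.1 := fun v ↦
    WithAbs.toAbs v.1 (Function.extend w x 0 v)
  obtain ⟨β, hβ⟩ := (denseRange_algebraMap_pi K).exists_dist_lt y hε
  refine ⟨β, fun i ↦ ?_⟩
  have hi := (dist_pi_lt_iff hε).mp hβ (w i)
  rwa [dist_comm, dist_eq_norm, Pi.algebraMap_apply, WithAbs.algebraMap_right_apply,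
    ← WithAbs.toAbs_sub, WithAbs.norm_toAbs_eq, hw.extend_apply] at hi

end NumberField.InfinitePlace

open NumberField.InfinitePlace

theorem real_embeddings_simultaneous_approx (K : Type*) [Field K] [NumberField K]
    (r : ℕ) (σ : Fin r → (K →+* ℝ)) (hσ : Function.Injective σ)
    (η : Fin r → ℝ) (ε : ℝ) (hε : 0 < ε) :
    ∃ β : K, ∀ i, |σ i β - η i| < ε := by
  choose q hq using fun i ↦ exists_rat_near (η i) (half_pos hε)
  obtain ⟨β, hβ⟩ := exists_forall_apply_sub_lt (mk_ofRealHom_comp_injective.comp hσ)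
    (fun i ↦ (q i : K)) (half_pos hε)
  refine ⟨β, fun i ↦ ?_⟩
  have hβi : |σ i β - q i| < ε / 2 := by
    simpa only [Function.comp_apply, mk_ofRealHom_comp_apply, map_sub, map_ratCast] using hβ i
  calc |σ i β - η i| ≤ |σ i β - q i| + |q i - η i| := abs_sub_le _ _ _
    _ < ε := by linarith [hq i, abs_sub_comm (q i : ℝ) (η i)]
end

section
/- Let f(X) ∈ R[X] be a polynomial with f(x) ≥ 0 for all real x. If f is a sum of fourth powers of rational functions in R(X), then the degree of f is divisible by 4, and moreover any real root γ of f satisfies: (X - γ)^4 divides f(X). -/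
/-!
Clearing denominators turns `f = ∑ aᵢ⁴` into `f d⁴ = ∑ pᵢ⁴` with polynomials `pᵢ` and `d ≠ 0`,
so it suffices to show that a sum of fourth (indeed, of any even) powers of polynomials has degree
and root multiplicities divisible by the exponent. For the degree, the leading coefficients of the
`pᵢ` of maximal degree contribute a sum of even powers to the top coefficient, which cannot cancel.
For a root `γ`, evaluating at `γ` shows that `X - γ` divides every `pᵢ`, so `(X - γ)⁴` splits off
the sum and what remains is again a sum of fourth powers.
-/

open Polynomial

theorem IsFractionRing.exists_mul_pow_eq_sum_pow {A K ι : Type*} [CommRing A] [Field K]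
    [Algebra A K] [IsFractionRing A K] [Fintype ι] {n : ℕ} {f : A} {a : ι → K}
    (h : algebraMap A K f = ∑ i, a i ^ n) :
    ∃ d ∈ nonZeroDivisors A, ∃ p : ι → A, f * d ^ n = ∑ i, p i ^ n := by
  obtain ⟨⟨d, hd⟩, hint⟩ := IsLocalization.exist_integer_multiples (nonZeroDivisors A) .univ a
  choose p hp using fun i => hint i (Finset.mem_univ i)
  refine ⟨d, hd, p, IsFractionRing.injective A K ?_⟩
  simp only [map_mul, map_pow, map_sum, h, Finset.sum_mul, hp, Algebra.smul_def, mul_pow]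
  exact Finset.sum_congr rfl fun i _ => mul_comm _ _

section SumOfEvenPowers

variable {R ι : Type*} [CommRing R] [LinearOrder R] [IsStrictOrderedRing R] {n : ℕ}

theorem Polynomial.natDegree_sum_pow_of_even (hn : Even n) (s : Finset ι) (p : ι → R[X]) :
    (∑ i ∈ s, p i ^ n).natDegree = n * s.sup (fun i => (p i).natDegree) := by
  set N := s.sup (fun i => (p i).natDegree)
  have hle : ∀ i ∈ s, (p i).natDegree ≤ N := fun i hi =>
    Finset.le_sup (f := fun i => (p i).natDegree) hi
  refine le_antisymm (natDegree_sum_le_of_forall_le _ _ fun i hi =>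
    natDegree_pow_le.trans (Nat.mul_le_mul_left n (hle i hi))) ?_
  rcases Nat.eq_zero_or_pos (n * N) with h0 | hpos
  · exact h0.le.trans (Nat.zero_le _)
  have hs : s.Nonempty := Finset.nonempty_iff_ne_empty.2 fun hs => by simp [N, hs] at hpos
  obtain ⟨k, hk, hkN⟩ : ∃ k ∈ s, N = (p k).natDegree :=
    Finset.exists_mem_eq_sup s hs fun i => (p i).natDegree
  have hlead : (p k).coeff N ≠ 0 := by
    rw [hkN, coeff_natDegree, leadingCoeff_ne_zero]
    intro hk0
    simp [hkN, hk0] at hpos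
  have htop : (∑ i ∈ s, p i ^ n).coeff (n * N) = ∑ i ∈ s, (p i).coeff N ^ n := by
    rw [finsetSum_coeff]
    exact Finset.sum_congr rfl fun i hi => coeff_pow_of_natDegree_le (hle i hi)
  exact le_natDegree_of_ne_zero (htop ▸ (Finset.sum_pos'
    (fun i _ => hn.pow_nonneg ((p i).coeff N)) ⟨k, hk, hn.pow_pos hlead⟩).ne')

theorem Polynomial.exists_sum_pow_eq_X_sub_C_pow_mul_of_isRoot (hn : Even n) (hn0 : n ≠ 0)
    {s : Finset ι} {p : ι → R[X]} {a : R} (h : (∑ i ∈ s, p i ^ n).IsRoot a) :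
    ∃ q : ι → R[X], ∑ i ∈ s, p i ^ n = (X - C a) ^ n * ∑ i ∈ s, q i ^ n := by
  have hroots : ∀ i ∈ s, (p i).IsRoot a := by
    simp only [IsRoot.def, eval_finsetSum, eval_pow] at h
    exact fun i hi => pow_eq_zero_iff hn0 |>.1 <|
      (Finset.sum_eq_zero_iff_of_nonneg fun i _ => hn.pow_nonneg _).1 h i hi
  refine ⟨fun i => p i /ₘ (X - C a), ?_⟩
  rw [Finset.mul_sum]
  exact Finset.sum_congr rfl fun i hi => by
    rw [← mul_pow, mul_divByMonic_eq_iff_isRoot.2 (hroots i hi)]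

theorem Polynomial.dvd_rootMultiplicity_sum_pow_of_even (hn : Even n) (hn0 : n ≠ 0)
    (s : Finset ι) (p : ι → R[X]) (a : R) : n ∣ rootMultiplicity a (∑ i ∈ s, p i ^ n) := by
  induction hm : rootMultiplicity a (∑ i ∈ s, p i ^ n) using Nat.strong_induction_on
    generalizing p with
  | _ m ih =>
  by_cases hroot : (∑ i ∈ s, p i ^ n).IsRoot a
  · obtain ⟨q, hq⟩ := exists_sum_pow_eq_X_sub_C_pow_mul_of_isRoot hn hn0 hroot
    by_cases hq0 : ∑ i ∈ s, q i ^ n = 0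
    · simp [← hm, hq, hq0]
    have hm' : m = rootMultiplicity a (∑ i ∈ s, q i ^ n) + n := by
      rw [← hm, hq, mul_comm, rootMultiplicity_mul_X_sub_C_pow hq0]
    exact hm' ▸ dvd_add (ih _ (by omega) q rfl) dvd_rfl
  · exact hm ▸ rootMultiplicity_eq_zero hroot ▸ dvd_zero n

end SumOfEvenPowers

section Domain

variable {R : Type*} [CommRing R] [IsDomain R] {n : ℕ} {f d : R[X]}

theorem Polynomial.dvd_natDegree_of_dvd_natDegree_mul_pow (hd : d ≠ 0)
    (h : n ∣ (f * d ^ n).natDegree) : n ∣ f.natDegree := by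
  rcases eq_or_ne f 0 with rfl | hf
  · simp
  rw [natDegree_mul hf (pow_ne_zero _ hd), natDegree_pow] at h
  exact (Nat.dvd_add_left (dvd_mul_right _ _)).1 h

theorem Polynomial.rootMultiplicity_pow (a : R) (d : R[X]) (n : ℕ) :
    rootMultiplicity a (d ^ n) = n * rootMultiplicity a d := by
  classical
  rw [← count_roots, roots_pow, Multiset.count_nsmul, count_roots]

theorem Polynomial.dvd_rootMultiplicity_of_dvd_rootMultiplicity_mul_pow {a : R} (hd : d ≠ 0)
    (h : n ∣ rootMultiplicity a (f * d ^ n)) : n ∣ rootMultiplicity a f := by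
  rcases eq_or_ne f 0 with rfl | hf
  · simp
  rw [rootMultiplicity_mul (mul_ne_zero hf (pow_ne_zero _ hd)), rootMultiplicity_pow] at h
  exact (Nat.dvd_add_left (dvd_mul_right _ _)).1 h

end Domain

theorem Polynomial.pow_X_sub_C_dvd_of_dvd_rootMultiplicity {R : Type*} [CommRing R] {n : ℕ}
    {f : R[X]} {a : R} (ha : f.IsRoot a) (h : n ∣ rootMultiplicity a f) : (X - C a) ^ n ∣ f := by
  rcases eq_or_ne f 0 with rfl | hf
  · exact dvd_zero _
  exact (le_rootMultiplicity_iff hf).1 (Nat.le_of_dvd ((rootMultiplicity_pos hf).2 ha) h)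

theorem fourth_powers_degree_and_roots_general (f : ℝ[X])
    (hsum : ∃ (r : ℕ) (a : Fin r → RatFunc ℝ),
      algebraMap ℝ[X] (RatFunc ℝ) f = ∑ i, a i ^ 4) :
    4 ∣ f.natDegree ∧ ∀ γ : ℝ, f.eval γ = 0 → (X - C γ) ^ 4 ∣ f := by
  obtain ⟨r, a, ha⟩ := hsum
  obtain ⟨d, hd, p, hp⟩ := IsFractionRing.exists_mul_pow_eq_sum_pow ha
  have hd0 : d ≠ 0 := nonZeroDivisors.ne_zero hd
  refine ⟨dvd_natDegree_of_dvd_natDegree_mul_pow hd0 ?_, fun γ hγ =>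
    pow_X_sub_C_dvd_of_dvd_rootMultiplicity hγ
      (dvd_rootMultiplicity_of_dvd_rootMultiplicity_mul_pow hd0 ?_)⟩
  · rw [hp, natDegree_sum_pow_of_even (by decide)]
    exact dvd_mul_right _ _
  · rw [hp]
    exact dvd_rootMultiplicity_sum_pow_of_even (by decide) four_ne_zero _ _ _

theorem fourth_powers_degree_and_roots (f : ℝ[X])
    (hpos : ∀ x : ℝ, 0 ≤ f.eval x)
    (hsum : ∃ (r : ℕ) (a : Fin r → RatFunc ℝ),
      algebraMap ℝ[X] (RatFunc ℝ) f = ∑ i, a i ^ 4) :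
    4 ∣ f.natDegree ∧ ∀ γ : ℝ, f.eval γ = 0 → (X - C γ) ^ 4 ∣ f :=
  fourth_powers_degree_and_roots_general f hsum
end

section
/- Suppose f ∈ R[X] is a sum of fourth powers in R(X): f = a_1^4 + ... + a_r^4 with a_i ∈ R(X), and f = b_1^2 + ... + b_n^2 with b_i ∈ R[X]. If γ is a real root of f and p is the minimal polynomial of γ over Q (assuming γ algebraic and f ∈ Q[X]), then p^2 divides each b_i and p^4 divides f. -/
/-!
Evaluating at the real number `γ` shows that the minimal polynomial `p` of `γ` is a *real*
prime: if `p` divides a sum of even powers, it divides every term. For such a prime the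
`p`-adic valuation of a sum of `k`-th powers is a multiple of `k`. Clearing denominators in
`f = ∑ aᵢ⁴` gives `D⁴ f = ∑ cᵢ⁴`, so `v_p(f) ≡ 0 mod 4`, and `v_p(f) ≥ 1` since `f(γ) = 0`;
hence `p⁴ ∣ f`. Then `p³ ∣ ∑ bᵢ²` forces `p² ∣ bᵢ`.
-/

open Polynomial

theorem minpoly_dvd_of_dvd_sum_pow {K S ι : Type*} [Field K] [CommRing S] [LinearOrder S]
    [IsStrictOrderedRing S] [Algebra K S] [Fintype ι] (γ : S) {k : ℕ} (hk : Even k)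
    (hk0 : k ≠ 0) (c : ι → K[X]) (h : minpoly K γ ∣ ∑ i, c i ^ k) (i : ι) :
    minpoly K γ ∣ c i := by
  refine minpoly.dvd K γ ?_
  have hsum : ∑ j, aeval γ (c j) ^ k = 0 := by
    simpa only [map_sum, map_pow] using (aeval_eq_zero_of_dvd_aeval_eq_zero h (minpoly.aeval K γ))
  have hi := (Finset.sum_eq_zero_iff_of_nonneg fun j _ => hk.pow_nonneg (aeval γ (c j))).mp
    hsum i (Finset.mem_univ i)
  exact pow_eq_zero_iff hk0 |>.mp hi

theorem IsFractionRing.exists_pow_mul_eq_sum_pow {R K ι : Type*} [CommRing R] [IsDomain R]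
    [Field K] [Algebra R K] [IsFractionRing R K] [Fintype ι] (k : ℕ) (f : R)
    (a : ι → K) (h : algebraMap R K f = ∑ i, a i ^ k) :
    ∃ (D : R) (c : ι → R), D ≠ 0 ∧ D ^ k * f = ∑ i, c i ^ k := by
  obtain ⟨D, hD⟩ := IsLocalization.exist_integer_multiples_of_finite (nonZeroDivisors R) a
  choose c hc using hD
  refine ⟨D, c, nonZeroDivisors.ne_zero D.2, IsFractionRing.injective R K ?_⟩
  simp only [map_mul, map_pow, map_sum, h, Finset.mul_sum, hc, Algebra.smul_def, mul_pow]

section RealPrime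

variable {R ι : Type*} [CommRing R] [IsDomain R] [Fintype ι] {p : R} {k : ℕ}

theorem pow_succ_dvd_of_pow_mul_add_one_dvd_sum_pow
    (hreal : ∀ c : ι → R, p ∣ ∑ i, c i ^ k → ∀ i, p ∣ c i)
    (hp0 : p ≠ 0) (j : ℕ) (b : ι → R) (h : p ^ (k * j + 1) ∣ ∑ i, b i ^ k) (i : ι) : p ^ (j + 1) ∣ b i := by
  induction j generalizing b i with
  | zero => simpa using hreal b (by simpa using h) i
  | succ j ih =>
    have hb : ∀ i, p ^ (j + 1) ∣ b i :=
      fun i => ih b ((pow_dvd_pow p (by nlinarith)).trans h) i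
    choose c hc using hb
    have hsum : ∑ i, b i ^ k = p ^ (k * (j + 1)) * ∑ i, c i ^ k := by
      simp only [hc, mul_pow, ← pow_mul, Finset.mul_sum, mul_comm (j + 1) k]
    have hpc : p ∣ ∑ i, c i ^ k := by
      rw [hsum, pow_succ] at h
      exact (mul_dvd_mul_iff_left (pow_ne_zero _ hp0)).mp h
    rw [hc i, pow_succ]
    exact mul_dvd_mul_left _ (hreal c hpc i)

theorem pow_mul_succ_dvd_of_pow_mul_add_one_dvd_sum_pow
    (hreal : ∀ c : ι → R, p ∣ ∑ i, c i ^ k → ∀ i, p ∣ c i)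
    (hp0 : p ≠ 0) (j : ℕ) (b : ι → R)
    (h : p ^ (k * j + 1) ∣ ∑ i, b i ^ k) : p ^ (k * (j + 1)) ∣ ∑ i, b i ^ k := by
  refine Finset.dvd_sum fun i _ => ?_
  rw [mul_comm, pow_mul]
  exact pow_dvd_pow_of_dvd (pow_succ_dvd_of_pow_mul_add_one_dvd_sum_pow hreal hp0 j b h i) k

theorem pow_dvd_of_dvd_of_pow_mul_eq_sum_pow [WfDvdMonoid R]
    (hreal : ∀ c : ι → R, p ∣ ∑ i, c i ^ k → ∀ i, p ∣ c i)
    (hp : Prime p) {f D : R} (hD : D ≠ 0) (c : ι → R) (hf : D ^ k * f = ∑ i, c i ^ k) (hpf : p ∣ f) : p ^ k ∣ f := by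
  obtain ⟨e, D', hpD', rfl⟩ := WfDvdMonoid.max_power_factor' hD hp.not_isUnit
  have hfac : (p ^ e * D') ^ k * f = p ^ (k * e) * (D' ^ k * f) := by ring
  rw [hfac] at hf
  have hdvd : p ^ (k * e + 1) ∣ ∑ i, c i ^ k := by
    rw [← hf, pow_succ]
    exact mul_dvd_mul_left _ (dvd_mul_of_dvd_right hpf _)
  have hdvd' := pow_mul_succ_dvd_of_pow_mul_add_one_dvd_sum_pow hreal hp.ne_zero e c hdvd
  rw [← hf, mul_add, mul_one, pow_add] at hdvd'
  exact hp.pow_dvd_of_dvd_mul_left k (fun h => hpD' (hp.dvd_of_dvd_pow h))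
    ((mul_dvd_mul_iff_left (pow_ne_zero _ hp.ne_zero)).mp hdvd')

end RealPrime

theorem minpoly_fourth_power_divides (f : ℚ[X])
    (hsum4 : ∃ (r : ℕ) (a : Fin r → RatFunc ℚ),
      algebraMap ℚ[X] (RatFunc ℚ) f = ∑ i, a i ^ 4)
    (n : ℕ) (b : Fin n → ℚ[X]) (hsq : f = ∑ i, b i ^ 2)
    (γ : ℝ) (hγ : IsIntegral ℚ γ) (hroot : Polynomial.aeval γ f = 0) :
    (∀ i, minpoly ℚ γ ^ 2 ∣ b i) ∧ minpoly ℚ γ ^ 4 ∣ f := by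
  have hp : Prime (minpoly ℚ γ) := (minpoly.irreducible hγ).prime
  obtain ⟨r, a, ha⟩ := hsum4
  obtain ⟨D, c, hD, hDf⟩ := IsFractionRing.exists_pow_mul_eq_sum_pow 4 f a ha
  have h4 : minpoly ℚ γ ^ 4 ∣ f :=
    pow_dvd_of_dvd_of_pow_mul_eq_sum_pow
      (minpoly_dvd_of_dvd_sum_pow γ (by decide) (by decide)) hp hD c hDf
      (minpoly.dvd ℚ γ hroot)
  refine ⟨fun i => ?_, h4⟩
  have h3 : minpoly ℚ γ ^ (2 * 1 + 1) ∣ ∑ i, b i ^ 2 := hsq ▸ (pow_dvd_pow _ (by norm_num)).trans h4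
  exact pow_succ_dvd_of_pow_mul_add_one_dvd_sum_pow
    (minpoly_dvd_of_dvd_sum_pow γ (by decide) (by decide)) hp.ne_zero 1 b h3 i
end
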